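/- Let E be a finite type and let S₁, …, S_b be finite subsets of E (b ≥ 1) such that for every index k there exists an element e ∈ S_k with e ∉ S_j for all j ≠ k. Then the linear subspace W = { ℓ : E → ℝ | for every k with 1 ≤ k ≤ b − 1, ∑_{e ∈ S_k} ℓ(e) = ∑_{e ∈ S_{k+1}} ℓ(e) } of the real vector space E → ℝ has dimension |E| − (b − 1); that is, W has codimension b − 1. -/

import Mathlib

/-!
The map `ℓ ↦ (∑_{e ∈ S_k} ℓ e)_k` from `E → ℝ` to `Fin b → ℝ` is surjective, since a weight put
on the private element of `S_k` is seen by the `k`-th sum only. `W` is the preimage under this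
map of the line of constant vectors, so `dim W = 1 + (|E| - b)`.
-/

open Module

theorem Submodule.finrank_comap_of_surjective {K M N : Type*} [DivisionRing K]
    [AddCommGroup M] [Module K M] [AddCommGroup N] [Module K N] [FiniteDimensional K M]
    {f : M →ₗ[K] N} (hf : Function.Surjective f) (V : Submodule K N) :
    finrank K (V.comap f) = finrank K V + finrank K (LinearMap.ker f) := by
  let g : V.comap f →ₗ[K] V := f.restrict fun _ hx => hx
  have hg : LinearMap.range g = ⊤ := by
    refine LinearMap.range_eq_top.2 fun ⟨y, hy⟩ => ?_
    obtain ⟨x, rfl⟩ := hf y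
    exact ⟨⟨x, hy⟩, rfl⟩
  have := g.finrank_range_add_finrank_ker
  rw [hg, finrank_top, LinearMap.ker_restrict,
    (Submodule.comapSubtypeEquivOfLe (LinearMap.ker_le_comap f)).finrank_eq] at this
  exact this.symm

section SubsetSums

variable (R : Type*) {E ι : Type*} [Semiring R]

def subsetSums (S : ι → Finset E) : (E → R) →ₗ[R] (ι → R) :=
  LinearMap.pi fun k => ∑ e ∈ S k, LinearMap.proj e

variable {R}

@[simp]
theorem subsetSums_apply (S : ι → Finset E) (ℓ : E → R) (k : ι) :
    subsetSums R S ℓ k = ∑ e ∈ S k, ℓ e := by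
  simp [subsetSums]

theorem subsetSums_surjective [Fintype ι] {S : ι → Finset E}
    (h : ∀ k, ∃ e ∈ S k, ∀ j, j ≠ k → e ∉ S j) : Function.Surjective (subsetSums R S) := by
  classical
  choose p hpS hp using h
  intro c
  refine ⟨∑ j, Pi.single (p j) (c j), funext fun k => ?_⟩
  have hsingle : ∀ j, ∑ e ∈ S k, Pi.single (p j) (c j) e = if j = k then c k else 0 := by
    intro j
    split_ifs with hjk
    · subst hjk; simp [hpS j]
    · simp [Pi.single_apply, hp j k (Ne.symm hjk)]
  simp only [subsetSums_apply, Finset.sum_apply]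
  rw [Finset.sum_comm]
  simp [hsingle]

end SubsetSums

theorem mem_span_one_iff_consecutive_eq {R : Type*} [Semiring R] {b : ℕ} (c : Fin b → R) :
    c ∈ R ∙ (1 : Fin b → R) ↔
      ∀ (k : ℕ) (hk : k + 1 < b), c ⟨k, Nat.lt_of_succ_lt hk⟩ = c ⟨k + 1, hk⟩ := by
  rw [Submodule.mem_span_singleton]
  constructor
  · rintro ⟨a, rfl⟩ k hk
    simp
  · intro hc
    cases b with
    | zero => exact ⟨0, Subsingleton.elim _ _⟩
    | succ n =>
      refine ⟨c 0, funext fun i => ?_⟩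
      induction i using Fin.induction with
      | zero => simp
      | succ i ih =>
        simp only [Pi.smul_apply, Pi.one_apply, smul_eq_mul, mul_one] at ih ⊢
        exact ih.trans (hc i (by omega))

theorem codim_length_equations_general
    {E : Type*} [Fintype E]
    (b : ℕ) (hb : 1 ≤ b) (S : Fin b → Finset E)
    (h : ∀ k, ∃ e ∈ S k, ∀ j, j ≠ k → e ∉ S j)
    (W : Submodule ℝ (E → ℝ))
    (hW : ∀ ℓ : E → ℝ, ℓ ∈ W ↔
      ∀ (k : ℕ) (hk : k + 1 < b),
        ∑ e ∈ S ⟨k, Nat.lt_of_succ_lt hk⟩, ℓ e = ∑ e ∈ S ⟨k + 1, hk⟩, ℓ e) :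
    Module.finrank ℝ W = Fintype.card E - (b - 1) := by
  have hW_eq : W = (ℝ ∙ (1 : Fin b → ℝ)).comap (subsetSums ℝ S) := by
    ext ℓ
    simp only [hW, Submodule.mem_comap, mem_span_one_iff_consecutive_eq, subsetSums_apply]
  have hsurj := subsetSums_surjective (R := ℝ) h
  have hrank := (subsetSums ℝ S).finrank_range_add_finrank_ker
  rw [LinearMap.range_eq_top.2 hsurj, finrank_top, finrank_fin_fun,
    Module.finrank_fintype_fun_eq_card] at hrank
  have : NeZero b := ⟨by omega⟩
  rw [hW_eq, Submodule.finrank_comap_of_surjective hsurj, finrank_span_singleton one_ne_zero]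
  omega

/-- If `S₁, …, S_b` (with `b ≥ 1`) are finite subsets of a finite type `E` such that
each `S_k` contains an element belonging to no other `S_j`, then the subspace
`W = { ℓ : E → ℝ | ∑_{e ∈ S_k} ℓ e = ∑_{e ∈ S_{k+1}} ℓ e for 1 ≤ k ≤ b−1 }`
has dimension `|E| − (b − 1)`, i.e. codimension `b − 1`. -/
theorem codim_length_equations
    {E : Type*} [Fintype E] [DecidableEq E]
    (b : ℕ) (hb : 1 ≤ b) (S : Fin b → Finset E)
    (h : ∀ k, ∃ e ∈ S k, ∀ j, j ≠ k → e ∉ S j)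
    (W : Submodule ℝ (E → ℝ))
    (hW : ∀ ℓ : E → ℝ, ℓ ∈ W ↔
      ∀ (k : ℕ) (hk : k + 1 < b),
        ∑ e ∈ S ⟨k, Nat.lt_of_succ_lt hk⟩, ℓ e = ∑ e ∈ S ⟨k + 1, hk⟩, ℓ e) :
    Module.finrank ℝ W = Fintype.card E - (b - 1) :=
  codim_length_equations_general b hb S h W hW
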